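/- Fix a linear contract instance and let R_⋆ := max_{1≤i≤n} (1 − α_{i−1,i})·R_i (with α_{0,1} := 0). Let π be any valid dynamic linear contract with α^k ≤ α_{n−1,n} for all k and total duration T := Σ_k τ^k. Then for every t ∈ (0, T]: (u_P^{(t)}(π) − R_⋆·t) + ψ(A^{(t)}/t)·t ≤ ∫_0^t ψ(A^{(s)}/s) ds, where A^{(t)} is the cumulative scalar contract up to time t and ψ is the potential function of the instance. (The excess of the cumulative principal utility over the static optimum, plus the time-weighted potential, is bounded by the integral of the raw potential.) -/

import Mathlib

open Finset

/-- Indifference point `α_{i,i+1}` between actions `i` and `i+1`. -/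
noncomputable def indiff (c R : ℕ → ℝ) (i : ℕ) : ℝ :=
  (c (i + 1) - c i) / (R (i + 1) - R i)

/-- Breakpoint `α_{i,i+1}` with the convention `α_{0,1} := 0`. -/
noncomputable def bp (c R : ℕ → ℝ) (i : ℕ) : ℝ :=
  if i = 0 then 0 else indiff c R i

/-- A linear contract instance with `n ≥ 2` actions indexed `1,…,n`:
costs `0 = c_1 < … < c_n`, rewards `0 ≤ R_1 < … < R_n`, and indifference
points satisfying `0 < α_{1,2} < … < α_{n-1,n} ≤ 1`. -/
def LinInstance (n : ℕ) (c R : ℕ → ℝ) : Prop :=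
  2 ≤ n ∧ c 1 = 0 ∧ 0 ≤ R 1 ∧
    (∀ i, 1 ≤ i → i < n → c i < c (i + 1)) ∧
    (∀ i, 1 ≤ i → i < n → R i < R (i + 1)) ∧
    0 < indiff c R 1 ∧
    (∀ i, 1 ≤ i → i + 1 ≤ n - 1 → indiff c R i < indiff c R (i + 1)) ∧
    indiff c R (n - 1) ≤ 1

/-- Best-response set of the agent to the linear contract with scalar `x`. -/
def BR (n : ℕ) (c R : ℕ → ℝ) (x : ℝ) : Set ℕ :=
  {i | i ∈ Finset.Icc 1 n ∧ ∀ j ∈ Finset.Icc 1 n, x * R j - c j ≤ x * R i - c i}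

/-- A dynamic linear contract with `K` segments (indexed `1,…,K`):
scalars `α`, durations `τ`, and actions `a`. -/
structure DLC where
  K : ℕ
  α : ℕ → ℝ
  τ : ℕ → ℝ
  a : ℕ → ℕ

namespace DLC

/-- Total duration of the first `k` segments. -/
noncomputable def Tsum (π : DLC) (k : ℕ) : ℝ := ∑ j ∈ Finset.Icc 1 k, π.τ j

/-- Cumulative scalar contract of the first `k` segments. -/
noncomputable def Asum (π : DLC) (k : ℕ) : ℝ := ∑ j ∈ Finset.Icc 1 k, π.α j * π.τ j

/-- Time-averaged contract `ᾱ^k` after the first `k` segments. -/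
noncomputable def avg (π : DLC) (k : ℕ) : ℝ := π.Asum k / π.Tsum k

/-- Validity: positive durations, nonnegative scalars, actions in `{1,…,n}`,
and each action is a best response to the historical average contract at the
end of its segment, and (for `k ≥ 2`) also at its beginning. -/
def Valid (n : ℕ) (c R : ℕ → ℝ) (π : DLC) : Prop :=
  1 ≤ π.K ∧
    (∀ k ∈ Finset.Icc 1 π.K, 0 ≤ π.α k ∧ 0 < π.τ k ∧ π.a k ∈ Finset.Icc 1 n) ∧
    (∀ k ∈ Finset.Icc 1 π.K, π.a k ∈ BR n c R (π.avg k)) ∧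
    (∀ k, 2 ≤ k → k ≤ π.K → π.a k ∈ BR n c R (π.avg (k - 1)))

/-- Time-averaged principal utility. -/
noncomputable def Util (R : ℕ → ℝ) (π : DLC) : ℝ :=
  (∑ k ∈ Finset.Icc 1 π.K, π.τ k * (1 - π.α k) * R (π.a k)) / π.Tsum π.K

/-- Time-averaged agent utility. -/
noncomputable def UtilA (c R : ℕ → ℝ) (π : DLC) : ℝ :=
  (∑ k ∈ Finset.Icc 1 π.K, π.τ k * (π.α k * R (π.a k) - c (π.a k))) / π.Tsum π.K

/-- Free-fall: the zero contract is offered on every segment after the first. -/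
def FreeFall (π : DLC) : Prop := ∀ k, 2 ≤ k → k ≤ π.K → π.α k = 0

/-- Cumulative principal utility `u_P^{(t)}(π)` up to time `t`. -/
noncomputable def cumUtil (R : ℕ → ℝ) (π : DLC) (t : ℝ) : ℝ :=
  ∑ k ∈ Finset.Icc 1 π.K,
    (min t (π.Tsum k) - min t (π.Tsum (k - 1))) * (1 - π.α k) * R (π.a k)

/-- Cumulative scalar contract `A^{(t)}` up to time `t`. -/
noncomputable def cumA (π : DLC) (t : ℝ) : ℝ :=
  ∑ k ∈ Finset.Icc 1 π.K, (min t (π.Tsum k) - min t (π.Tsum (k - 1))) * π.α k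

end DLC

/-- The raw potential function `ψ`: piecewise linear with `ψ(0) = 0` and slope
`R_i` on the interval `[α_{i-1,i}, α_{i,i+1}]` for `1 ≤ i ≤ n − 1`. -/
noncomputable def potential (n : ℕ) (c R : ℕ → ℝ) (x : ℝ) : ℝ :=
  ∑ i ∈ Finset.Icc 1 (n - 1), R i * (min x (bp c R i) - min x (bp c R (i - 1)))

/-!
On the `k`-th segment `[T_{k-1}, T_k]` the running average `β(s) = A(s)/s` is a weighted mean of
the historical average `ᾱ^{k-1}` and the current scalar `α^k`, so it moves monotonically between
`ᾱ^{k-1}` and `ᾱ^k`. Validity puts both in the best-response interval of the action `a = a^k`,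
hence `β(s)` stays in `[α_{a-1,a}, α_{m,m+1}]` with `m = min a (n-1)`, where `ψ` is affine with
slope `R_m`. Then `s ψ(β(s)) = R_m A(s) + D s` is affine in `s`, and on the segment the
inequality reduces to the pointwise bound `R_m (α^k - β) + (1 - α^k) R_a ≤ R_⋆`. For `a < n` this
is `(1 - α_{a-1,a}) R_a ≤ R_⋆` together with `β ≥ α_{a-1,a}`; for `a = n` the cap forces
`β = α^k = α_{n-1,n}`. Summing over the segments telescopes.
-/

@[simp]
lemma bp_zero (c R : ℕ → ℝ) : bp c R 0 = 0 := if_pos rfl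

lemma min_sub_min_of_le {x y b : ℝ} (hx : x ≤ b) (hy : y ≤ b) : min x b - min y b = x - y := by
  rw [min_eq_left hx, min_eq_left hy]

lemma min_sub_min_of_ge {x y b : ℝ} (hx : b ≤ x) (hy : b ≤ y) : min x b - min y b = 0 := by
  rw [min_eq_right hx, min_eq_right hy, sub_self]

lemma weighted_mean_mem_uIcc {p q r x y : ℝ} (hp : 0 < p) (hq : 0 ≤ q) (hqr : q ≤ r) :
    (p * x + q * y) / (p + q) ∈ Set.uIcc x ((p * x + r * y) / (p + r)) := by
  have hpq : 0 < p + q := by linarith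
  have hpr : 0 < p + r := by linarith
  rcases le_total x y with hxy | hxy
  · rw [Set.uIcc_of_le (by rw [le_div_iff₀ hpr]; nlinarith)]
    constructor
    · rw [le_div_iff₀ hpq]; nlinarith
    · rw [div_le_div_iff₀ hpq hpr]; nlinarith [mul_le_mul_of_nonneg_left hqr hp.le]
  · rw [Set.uIcc_of_ge (by rw [div_le_iff₀ hpr]; nlinarith)]
    constructor
    · rw [div_le_div_iff₀ hpr hpq]; nlinarith [mul_le_mul_of_nonneg_left hqr hp.le]
    · rw [div_le_iff₀ hpq]; nlinarith

lemma continuous_potential (n : ℕ) (c R : ℕ → ℝ) : Continuous (potential n c R) := by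
  unfold potential
  fun_prop

lemma abs_potential_le (n : ℕ) (c R : ℕ → ℝ) (x : ℝ) :
    |potential n c R x| ≤ ∑ i ∈ Finset.Icc 1 (n - 1), |R i| * |bp c R i - bp c R (i - 1)| := by
  refine (Finset.abs_sum_le_sum_abs _ _).trans (Finset.sum_le_sum fun i _ => ?_)
  have hmin := abs_min_sub_min_le_max x (bp c R i) x (bp c R (i - 1))
  rw [sub_self, abs_zero, max_eq_right (abs_nonneg _)] at hmin
  rw [abs_mul]
  exact mul_le_mul_of_nonneg_left hmin (abs_nonneg _)

lemma intervalIntegrable_potential_comp (n : ℕ) (c R : ℕ → ℝ) {g : ℝ → ℝ}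
    (hg : Measurable g) (a b : ℝ) :
    IntervalIntegrable (fun s => potential n c R (g s)) MeasureTheory.volume a b :=
  IntervalIntegrable.mono_fun' intervalIntegrable_const
    ((continuous_potential n c R).measurable.comp hg).aestronglyMeasurable
    (Filter.Eventually.of_forall fun s => abs_potential_le n c R (g s))

namespace LinInstance

variable {n : ℕ} {c R : ℕ → ℝ}

lemma two_le (h : LinInstance n c R) : 2 ≤ n := h.1

lemma R_lt_R_succ (h : LinInstance n c R) {i : ℕ} (hi : 1 ≤ i) (hin : i < n) : R i < R (i + 1) :=
  h.2.2.2.2.1 i hi hin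

lemma bp_lt_bp_succ (h : LinInstance n c R) {j : ℕ} (hj : j + 1 ≤ n - 1) :
    bp c R j < bp c R (j + 1) := by
  rcases Nat.eq_zero_or_pos j with rfl | hj0
  · simpa [bp] using h.2.2.2.2.2.1
  · simpa [bp, hj0.ne'] using h.2.2.2.2.2.2.1 j hj0 hj

lemma bp_mono (h : LinInstance n c R) {i j : ℕ} (hij : i ≤ j) (hj : j ≤ n - 1) :
    bp c R i ≤ bp c R j := by
  induction j, hij using Nat.le_induction with
  | base => rfl
  | succ j _ ih => exact (ih (by omega)).trans (h.bp_lt_bp_succ hj).le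

lemma R_mono (h : LinInstance n c R) {i j : ℕ} (hi : 1 ≤ i) (hij : i ≤ j) (hj : j ≤ n) :
    R i ≤ R j := by
  induction j, hij using Nat.le_induction with
  | base => rfl
  | succ j hij ih => exact (ih (by omega)).trans (h.R_lt_R_succ (by omega) (by omega)).le

lemma R_nonneg (h : LinInstance n c R) {i : ℕ} (hi : 1 ≤ i) (hin : i ≤ n) : 0 ≤ R i :=
  h.2.2.1.trans (h.R_mono le_rfl hi hin)

lemma bp_pred_le_of_mem_BR (h : LinInstance n c R) {a : ℕ} {x : ℝ} (ha : a ∈ BR n c R x)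
    (ha2 : 2 ≤ a) : bp c R (a - 1) ≤ x := by
  obtain ⟨ha, hbr⟩ := ha
  rw [Finset.mem_Icc] at ha
  have hsucc : a - 1 + 1 = a := by omega
  have hR := h.R_lt_R_succ (i := a - 1) (by omega) (by omega)
  have hgain := hbr (a - 1) (Finset.mem_Icc.2 ⟨by omega, by omega⟩)
  rw [hsucc] at hR
  rw [bp, if_neg (by omega), indiff, hsucc, div_le_iff₀ (sub_pos.2 hR)]
  linarith

lemma le_bp_of_mem_BR (h : LinInstance n c R) {a : ℕ} {x : ℝ} (ha : a ∈ BR n c R x)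
    (han : a ≤ n - 1) : x ≤ bp c R a := by
  obtain ⟨ha, hbr⟩ := ha
  rw [Finset.mem_Icc] at ha
  have hR := h.R_lt_R_succ ha.1 (by omega)
  have hgain := hbr (a + 1) (Finset.mem_Icc.2 ⟨by omega, by omega⟩)
  rw [bp, if_neg (by omega), indiff, le_div_iff₀ (sub_pos.2 hR)]
  linarith

lemma mem_Icc_of_mem_BR (h : LinInstance n c R) {a : ℕ} {x : ℝ} (ha : a ∈ BR n c R x)
    (hx0 : 0 ≤ x) (hxn : x ≤ bp c R (n - 1)) :
    x ∈ Set.Icc (bp c R (a - 1)) (bp c R (min a (n - 1))) := by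
  have ha1 : 1 ≤ a := (Finset.mem_Icc.1 ha.1).1
  refine ⟨?_, ?_⟩
  · rcases (show a = 1 ∨ 2 ≤ a by omega) with rfl | ha2
    · simpa using hx0
    · exact h.bp_pred_le_of_mem_BR ha ha2
  · rcases le_total a (n - 1) with han | han
    · rw [min_eq_left han]
      exact h.le_bp_of_mem_BR ha han
    · rwa [min_eq_right han]

lemma potential_sub_potential (h : LinInstance n c R) {m : ℕ} (hm1 : 1 ≤ m) (hmn : m ≤ n - 1)
    {x y : ℝ} (hx : x ∈ Set.Icc (bp c R (m - 1)) (bp c R m))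
    (hy : y ∈ Set.Icc (bp c R (m - 1)) (bp c R m)) :
    potential n c R x - potential n c R y = R m * (x - y) := by
  have hterm : ∀ i ∈ Finset.Icc 1 (n - 1),
      R i * (min x (bp c R i) - min x (bp c R (i - 1)))
        - R i * (min y (bp c R i) - min y (bp c R (i - 1)))
        = if i = m then R m * (x - y) else 0 := by
    intro i hi
    rw [Finset.mem_Icc] at hi
    rcases lt_trichotomy i m with him | rfl | hmi
    · have hb : ∀ j ≤ i, bp c R j ≤ bp c R (m - 1) := fun j hj => h.bp_mono (by omega) (by omega)
      have e1 := min_sub_min_of_ge ((hb i le_rfl).trans hx.1) ((hb i le_rfl).trans hy.1)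
      have e2 := min_sub_min_of_ge ((hb (i - 1) (by omega)).trans hx.1)
        ((hb (i - 1) (by omega)).trans hy.1)
      rw [if_neg him.ne]
      linear_combination R i * e1 - R i * e2
    · rw [if_pos rfl]
      linear_combination R i * min_sub_min_of_le hx.2 hy.2 - R i * min_sub_min_of_ge hx.1 hy.1
    · have hb : ∀ j, m ≤ j → j ≤ i → bp c R m ≤ bp c R j := fun j h1 h2 => h.bp_mono h1 (by omega)
      have e1 := min_sub_min_of_le (hx.2.trans (hb i hmi.le le_rfl))
        (hy.2.trans (hb i hmi.le le_rfl))
      have e2 := min_sub_min_of_le (hx.2.trans (hb (i - 1) (by omega) (by omega)))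
        (hy.2.trans (hb (i - 1) (by omega) (by omega)))
      rw [if_neg hmi.ne']
      linear_combination R i * e1 - R i * e2
  rw [potential, potential, ← Finset.sum_sub_distrib, Finset.sum_congr rfl hterm,
    Finset.sum_ite_eq' _ m, if_pos (Finset.mem_Icc.2 ⟨hm1, hmn⟩)]

lemma slope_mul_sub_add_le (h : LinInstance n c R) {Rstar : ℝ}
    (hRstar : IsGreatest ((fun i => (1 - bp c R (i - 1)) * R i) '' Set.Icc 1 n) Rstar)
    {a : ℕ} (ha1 : 1 ≤ a) (han : a ≤ n) {β α : ℝ}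
    (hβ : β ∈ Set.Icc (bp c R (a - 1)) (bp c R (min a (n - 1))))
    (hα : a = n → bp c R (n - 1) ≤ α) :
    R (min a (n - 1)) * (α - β) + (1 - α) * R a ≤ Rstar := by
  have hstatic : (1 - bp c R (a - 1)) * R a ≤ Rstar := hRstar.2 ⟨a, ⟨ha1, han⟩, rfl⟩
  rcases le_or_gt a (n - 1) with han' | hna
  · rw [min_eq_left han']
    nlinarith [mul_le_mul_of_nonneg_left hβ.1 (h.R_nonneg ha1 han)]
  · have hn2 := h.two_le
    obtain rfl : a = n := by omega
    rw [min_eq_right (by omega)] at hβ ⊢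
    obtain rfl : β = bp c R (a - 1) := le_antisymm hβ.2 hβ.1
    have hR : R (a - 1) < R a := by
      simpa [show a - 1 + 1 = a by omega] using h.R_lt_R_succ (i := a - 1) (by omega) (by omega)
    nlinarith [mul_nonneg (sub_nonneg.2 (hα rfl)) (sub_pos.2 hR).le]

end LinInstance

namespace DLC

variable (π : DLC)

@[simp]
lemma Tsum_zero : π.Tsum 0 = 0 := by simp [Tsum]

@[simp]
lemma Asum_zero : π.Asum 0 = 0 := by simp [Asum]

lemma Tsum_succ (k : ℕ) : π.Tsum (k + 1) = π.Tsum k + π.τ (k + 1) :=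
  Finset.sum_Icc_succ_top (by omega) _

lemma Asum_succ (k : ℕ) : π.Asum (k + 1) = π.Asum k + π.α (k + 1) * π.τ (k + 1) :=
  Finset.sum_Icc_succ_top (by omega) _

lemma continuous_cumA : Continuous π.cumA := by
  unfold cumA
  fun_prop

lemma measurable_cumA_div : Measurable fun s => π.cumA s / s :=
  π.continuous_cumA.measurable.div measurable_id

lemma cumUtil_eq_sum_range (R : ℕ → ℝ) (t : ℝ) :
    π.cumUtil R t = ∑ k ∈ Finset.range π.K,
      (min t (π.Tsum (k + 1)) - min t (π.Tsum k)) * (1 - π.α (k + 1)) * R (π.a (k + 1)) := by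
  rw [cumUtil, ← Finset.Ico_add_one_right_eq_Icc, Finset.sum_Ico_eq_sum_range]
  simp only [add_comm 1, Nat.add_sub_cancel]

variable {π}

lemma Tsum_pos (hτ : ∀ j ∈ Finset.Icc 1 π.K, 0 < π.τ j) {k : ℕ} (hk1 : 1 ≤ k) (hk : k ≤ π.K) :
    0 < π.Tsum k :=
  (hτ k (Finset.mem_Icc.2 ⟨hk1, hk⟩)).trans_le <| Finset.single_le_sum
    (fun j hj => (hτ j (Finset.Icc_subset_Icc_right hk hj)).le) (Finset.mem_Icc.2 ⟨hk1, le_rfl⟩)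

section NonnegDurations

variable (hτ : ∀ j ∈ Finset.Icc 1 π.K, 0 ≤ π.τ j)
include hτ

lemma Tsum_le_Tsum {i j : ℕ} (hij : i ≤ j) (hj : j ≤ π.K) : π.Tsum i ≤ π.Tsum j :=
  Finset.sum_le_sum_of_subset_of_nonneg (Finset.Icc_subset_Icc_right hij)
    fun l hl _ => hτ l (Finset.Icc_subset_Icc_right hj hl)

lemma Tsum_nonneg {k : ℕ} (hk : k ≤ π.K) : 0 ≤ π.Tsum k := by
  simpa using Tsum_le_Tsum hτ (Nat.zero_le k) hk

lemma Asum_le_mul_Tsum {B : ℝ} (hB : ∀ j ∈ Finset.Icc 1 π.K, π.α j ≤ B) {k : ℕ}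
    (hk : k ≤ π.K) : π.Asum k ≤ B * π.Tsum k := by
  rw [Asum, Tsum, Finset.mul_sum]
  exact Finset.sum_le_sum fun j hj => mul_le_mul_of_nonneg_right
    (hB j (Finset.Icc_subset_Icc_right hk hj)) (hτ j (Finset.Icc_subset_Icc_right hk hj))

lemma avg_mem_Icc {B : ℝ} (hα : ∀ j ∈ Finset.Icc 1 π.K, 0 ≤ π.α j)
    (hB : ∀ j ∈ Finset.Icc 1 π.K, π.α j ≤ B) {k : ℕ} (hk : k ≤ π.K) (hT : 0 < π.Tsum k) :
    π.avg k ∈ Set.Icc 0 B := by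
  have hA : 0 ≤ π.Asum k := Finset.sum_nonneg fun j hj =>
    mul_nonneg (hα j (Finset.Icc_subset_Icc_right hk hj)) (hτ j (Finset.Icc_subset_Icc_right hk hj))
  exact ⟨div_nonneg hA hT.le, (div_le_iff₀ hT).2 (Asum_le_mul_Tsum hτ hB hk)⟩

lemma cumA_zero : π.cumA 0 = 0 :=
  Finset.sum_eq_zero fun j hj => by
    rw [Finset.mem_Icc] at hj
    rw [min_eq_left (Tsum_nonneg hτ hj.2), min_eq_left (Tsum_nonneg hτ (by omega)), sub_self,
      zero_mul]

lemma cumA_eq {k : ℕ} (hk : k < π.K) {s : ℝ} (hs : s ∈ Set.Icc (π.Tsum k) (π.Tsum (k + 1))) :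
    π.cumA s = π.Asum k + (s - π.Tsum k) * π.α (k + 1) := by
  suffices ∀ N, k + 1 ≤ N → N ≤ π.K → ∑ j ∈ Finset.Icc 1 N,
      (min s (π.Tsum j) - min s (π.Tsum (j - 1))) * π.α j
        = π.Asum k + (s - π.Tsum k) * π.α (k + 1) from this π.K hk le_rfl
  intro N hN hNK
  induction N, hN using Nat.le_induction with
  | base =>
    rw [Finset.sum_Icc_succ_top (by omega), Nat.add_sub_cancel, min_eq_left hs.2,
      min_eq_right hs.1, Asum]
    congr 1
    refine Finset.sum_congr rfl fun j hj => ?_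
    rw [Finset.mem_Icc] at hj
    obtain ⟨i, rfl⟩ : ∃ i, j = i + 1 := ⟨j - 1, by omega⟩
    rw [Nat.add_sub_cancel, min_eq_right ((Tsum_le_Tsum hτ hj.2 hk.le).trans hs.1),
      min_eq_right ((Tsum_le_Tsum hτ (by omega) hk.le).trans hs.1), Tsum_succ]
    ring
  | succ N hN ih =>
    rw [Finset.sum_Icc_succ_top (by omega), ih (by omega), Nat.add_sub_cancel,
      min_eq_left (hs.2.trans (Tsum_le_Tsum hτ (by omega) hNK)),
      min_eq_left (hs.2.trans (Tsum_le_Tsum hτ hN (by omega))), sub_self, zero_mul, add_zero]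

end NonnegDurations

namespace Valid

variable {n : ℕ} {c R : ℕ → ℝ}

lemma τ_pos (hπ : π.Valid n c R) : ∀ k ∈ Finset.Icc 1 π.K, 0 < π.τ k :=
  fun k hk => (hπ.2.1 k hk).2.1

lemma a_mem (hπ : π.Valid n c R) {k : ℕ} (hk : k < π.K) : π.a (k + 1) ∈ Finset.Icc 1 n :=
  (hπ.2.1 (k + 1) (Finset.mem_Icc.2 ⟨by omega, hk⟩)).2.2

lemma mem_BR_avg_succ (hπ : π.Valid n c R) {k : ℕ} (hk : k < π.K) :
    π.a (k + 1) ∈ BR n c R (π.avg (k + 1)) :=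
  hπ.2.2.1 (k + 1) (Finset.mem_Icc.2 ⟨by omega, hk⟩)

lemma mem_BR_avg (hπ : π.Valid n c R) {k : ℕ} (hk1 : 1 ≤ k) (hk : k < π.K) :
    π.a (k + 1) ∈ BR n c R (π.avg k) := by
  simpa using hπ.2.2.2 (k + 1) (by omega) hk

variable (hcap : ∀ k ∈ Finset.Icc 1 π.K, π.α k ≤ bp c R (n - 1))
include hcap

lemma avg_mem_Icc_of_mem_BR (h : LinInstance n c R) (hπ : π.Valid n c R) {j a : ℕ}
    (hj1 : 1 ≤ j) (hjK : j ≤ π.K) (hbr : a ∈ BR n c R (π.avg j)) :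
    π.avg j ∈ Set.Icc (bp c R (a - 1)) (bp c R (min a (n - 1))) := by
  have havg := avg_mem_Icc (fun i hi => (hπ.τ_pos i hi).le) (fun i hi => (hπ.2.1 i hi).1) hcap
    hjK (Tsum_pos hπ.τ_pos hj1 hjK)
  exact h.mem_Icc_of_mem_BR hbr havg.1 havg.2

lemma cumA_div_mem_Icc (h : LinInstance n c R) (hπ : π.Valid n c R) {k : ℕ} (hk : k < π.K)
    {s : ℝ} (hs : s ∈ Set.Icc (π.Tsum k) (π.Tsum (k + 1))) (hs0 : 0 < s) :
    π.cumA s / s ∈ Set.Icc (bp c R (π.a (k + 1) - 1)) (bp c R (min (π.a (k + 1)) (n - 1))) := by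
  have hend := avg_mem_Icc_of_mem_BR hcap h hπ (by omega) hk (hπ.mem_BR_avg_succ hk)
  rw [cumA_eq (fun i hi => (hπ.τ_pos i hi).le) hk hs]
  rcases Nat.eq_zero_or_pos k with rfl | hk1
  · have hτ1 : 0 < π.τ 1 := hπ.τ_pos 1 (Finset.mem_Icc.2 ⟨le_rfl, hk⟩)
    convert hend using 1
    simp only [avg, Asum_succ, Tsum_succ, Asum_zero, Tsum_zero]
    field_simp
    ring
  · have hT := Tsum_pos hπ.τ_pos hk1 hk.le
    have hstart := avg_mem_Icc_of_mem_BR hcap h hπ hk1 hk.le (hπ.mem_BR_avg hk1 hk)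
    have hmean := weighted_mean_mem_uIcc (x := π.avg k) (y := π.α (k + 1)) hT
      (sub_nonneg.2 hs.1) (show s - π.Tsum k ≤ π.τ (k + 1) by linarith [hs.2, Tsum_succ π k])
    have hmid : (π.Tsum k * π.avg k + (s - π.Tsum k) * π.α (k + 1)) / (π.Tsum k + (s - π.Tsum k))
        = (π.Asum k + (s - π.Tsum k) * π.α (k + 1)) / s := by
      rw [avg, mul_div_cancel₀ _ hT.ne', add_sub_cancel]
    have hright : (π.Tsum k * π.avg k + π.τ (k + 1) * π.α (k + 1)) / (π.Tsum k + π.τ (k + 1))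
        = π.avg (k + 1) := by
      rw [avg, mul_div_cancel₀ _ hT.ne', avg, Asum_succ, Tsum_succ, mul_comm (π.τ _)]
    rw [hmid, hright] at hmean
    exact Set.uIcc_subset_Icc hstart hend hmean

lemma bp_le_α_of_a_eq (h : LinInstance n c R) (hπ : π.Valid n c R) {k : ℕ} (hk : k < π.K)
    (ha : π.a (k + 1) = n) : bp c R (n - 1) ≤ π.α (k + 1) := by
  have hτk : 0 < π.τ (k + 1) := hπ.τ_pos (k + 1) (Finset.mem_Icc.2 ⟨by omega, hk⟩)
  have hpast := Asum_le_mul_Tsum (fun i hi => (hπ.τ_pos i hi).le) hcap hk.le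
  have hnow : bp c R (n - 1) ≤ π.avg (k + 1) := by
    simpa [ha] using h.bp_pred_le_of_mem_BR (hπ.mem_BR_avg_succ hk) (ha ▸ h.two_le)
  rw [avg, le_div_iff₀ (Tsum_pos hπ.τ_pos (by omega) hk), Asum_succ, Tsum_succ] at hnow
  nlinarith

lemma exists_potential_cumA_div_eq (h : LinInstance n c R) (hπ : π.Valid n c R) {k : ℕ}
    (hk : k < π.K) {v : ℝ} (hv : v ≤ π.Tsum (k + 1)) :
    ∃ D, ∀ s ∈ Set.Icc (π.Tsum k) v, 0 < s →
      potential n c R (π.cumA s / s) = R (min (π.a (k + 1)) (n - 1)) * (π.cumA s / s) + D := by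
  set a := π.a (k + 1)
  set m := min a (n - 1)
  have ha : 1 ≤ a ∧ a ≤ n := Finset.mem_Icc.1 (hπ.a_mem hk)
  have hm : 1 ≤ m ∧ m ≤ a ∧ m ≤ n - 1 :=
    ⟨le_min ha.1 (by have := h.two_le; omega), min_le_left _ _, min_le_right _ _⟩
  have hmem : ∀ s ∈ Set.Icc (π.Tsum k) v, 0 < s →
      π.cumA s / s ∈ Set.Icc (bp c R (m - 1)) (bp c R m) := fun s hs hs0 =>
    Set.Icc_subset_Icc_left (h.bp_mono (Nat.sub_le_sub_right hm.2.1 1) (by omega))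
      (cumA_div_mem_Icc hcap h hπ hk ⟨hs.1, hs.2.trans hv⟩ hs0)
  by_cases hv0 : 0 < v ∧ π.Tsum k ≤ v
  · refine ⟨potential n c R (π.cumA v / v) - R m * (π.cumA v / v), fun s hs hs0 => ?_⟩
    linear_combination h.potential_sub_potential hm.1 hm.2.2 (hmem s hs hs0)
      (hmem v ⟨hv0.2, le_rfl⟩ hv0.1)
  · exact ⟨0, fun s hs hs0 => absurd ⟨hs0.trans_le hs.2, hs.1.trans hs.2⟩ hv0⟩

lemma segment_bound (h : LinInstance n c R) {Rstar : ℝ}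
    (hRstar : IsGreatest ((fun i => (1 - bp c R (i - 1)) * R i) '' Set.Icc 1 n) Rstar)
    (hπ : π.Valid n c R) {k : ℕ} (hk : k < π.K) {v : ℝ}
    (hv : v ∈ Set.Icc (π.Tsum k) (π.Tsum (k + 1))) :
    v * potential n c R (π.cumA v / v) - π.Tsum k * potential n c R (π.cumA (π.Tsum k) / π.Tsum k)
      + (v - π.Tsum k) * (1 - π.α (k + 1)) * R (π.a (k + 1)) - (v - π.Tsum k) * Rstar
      ≤ ∫ s in π.Tsum k..v, potential n c R (π.cumA s / s) := by
  obtain ⟨D, hslope⟩ := exists_potential_cumA_div_eq hcap h hπ hk hv.2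
  set u := π.Tsum k
  set f := fun s => potential n c R (π.cumA s / s)
  set a := π.a (k + 1)
  set m := min a (n - 1)
  set α := π.α (k + 1)
  have hτ : ∀ i ∈ Finset.Icc 1 π.K, 0 ≤ π.τ i := fun i hi => (hπ.τ_pos i hi).le
  have ha : 1 ≤ a ∧ a ≤ n := Finset.mem_Icc.1 (hπ.a_mem hk)
  have hu0 : 0 ≤ u := Tsum_nonneg hτ hk.le
  have hscaled : ∀ s ∈ Set.Icc u v, s * f s = R m * π.cumA s + D * s := by
    intro s hs
    rcases (hu0.trans hs.1).eq_or_lt with rfl | hs0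
    · simp [cumA_zero hτ]
    · simp only [f, hslope s hs hs0]
      field_simp
  have hpointwise : ∀ s ∈ Set.Ioo u v, R m * α + D + (1 - α) * R a - Rstar ≤ f s := by
    intro s hs
    have hs' : s ∈ Set.Icc u v := Set.Ioo_subset_Icc_self hs
    have hs0 : 0 < s := hu0.trans_lt hs.1
    have := h.slope_mul_sub_add_le hRstar ha.1 ha.2
      (cumA_div_mem_Icc hcap h hπ hk ⟨hs'.1, hs'.2.trans hv.2⟩ hs0)
      (bp_le_α_of_a_eq hcap h hπ hk)
    simp only [f, hslope s hs' hs0]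
    linarith
  calc _ = (v - u) * (R m * α + D + (1 - α) * R a - Rstar) := by
        rw [hscaled v ⟨hv.1, le_rfl⟩, hscaled u ⟨le_rfl, hv.1⟩, cumA_eq hτ hk hv,
          cumA_eq hτ hk ⟨le_rfl, hv.1.trans hv.2⟩]
        ring
    _ = ∫ _ in u..v, (R m * α + D + (1 - α) * R a - Rstar) := by
      rw [intervalIntegral.integral_const, smul_eq_mul]
    _ ≤ ∫ s in u..v, f s :=
      intervalIntegral.integral_mono_on_of_le_Ioo hv.1 intervalIntegrable_const
        (intervalIntegrable_potential_comp n c R π.measurable_cumA_div u v) hpointwise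

lemma segment_bound_min (h : LinInstance n c R) {Rstar : ℝ}
    (hRstar : IsGreatest ((fun i => (1 - bp c R (i - 1)) * R i) '' Set.Icc 1 n) Rstar)
    (hπ : π.Valid n c R) {k : ℕ} (hk : k < π.K) (t : ℝ) :
    let F := fun j => min t (π.Tsum j)
    F (k + 1) * potential n c R (π.cumA (F (k + 1)) / F (k + 1))
        - F k * potential n c R (π.cumA (F k) / F k)
      + (F (k + 1) - F k) * (1 - π.α (k + 1)) * R (π.a (k + 1)) - (F (k + 1) - F k) * Rstar
      ≤ ∫ s in F k..F (k + 1), potential n c R (π.cumA s / s) := by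
  intro F
  have hT : π.Tsum k ≤ π.Tsum (k + 1) :=
    Tsum_le_Tsum (fun i hi => (hπ.τ_pos i hi).le) k.le_succ hk
  rcases le_total t (π.Tsum k) with htk | htk
  · simp [F, min_eq_left htk, min_eq_left (htk.trans hT)]
  · simp only [F, min_eq_right htk]
    exact segment_bound hcap h hRstar hπ hk ⟨le_min htk hT, min_le_right _ _⟩

end Valid

end DLC

/-- Potential inequality: for any valid dynamic linear contract
with scalars capped at `α_{n-1,n}`, the excess of cumulative principal utility
over the static optimum plus the time-weighted potential is bounded by the
integral of the raw potential. -/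
theorem potential_inequality (n : ℕ) (c R : ℕ → ℝ) (hInst : LinInstance n c R)
    (Rstar : ℝ)
    (hRstar : IsGreatest ((fun i => (1 - bp c R (i - 1)) * R i) '' Set.Icc 1 n) Rstar)
    (π : DLC) (hπ : π.Valid n c R)
    (hcap : ∀ k ∈ Finset.Icc 1 π.K, π.α k ≤ bp c R (n - 1))
    (t : ℝ) (ht0 : 0 < t) (htT : t ≤ π.Tsum π.K) :
    (π.cumUtil R t - Rstar * t) + potential n c R (π.cumA t / t) * t ≤
      ∫ s in (0 : ℝ)..t, potential n c R (π.cumA s / s) := by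
  set f := fun s => potential n c R (π.cumA s / s)
  set F := fun j => min t (π.Tsum j)
  have hF0 : F 0 = 0 := by simp [F, ht0.le]
  have hFK : F π.K = t := min_eq_left htT
  have hlength : ∑ k ∈ Finset.range π.K, (F (k + 1) - F k) = t := by
    rw [Finset.sum_range_sub F, hF0, hFK, sub_zero]
  have hscaled : ∑ k ∈ Finset.range π.K, (F (k + 1) * f (F (k + 1)) - F k * f (F k)) = t * f t := by
    rw [Finset.sum_range_sub (fun k => F k * f (F k)), hF0, hFK, zero_mul, sub_zero]
  calc _ = ∑ k ∈ Finset.range π.K, (F (k + 1) * f (F (k + 1)) - F k * f (F k)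
        + (F (k + 1) - F k) * (1 - π.α (k + 1)) * R (π.a (k + 1)) - (F (k + 1) - F k) * Rstar) := by
        rw [Finset.sum_sub_distrib, Finset.sum_add_distrib, hscaled, ← Finset.sum_mul, hlength,
          DLC.cumUtil_eq_sum_range]
        ring
    _ ≤ ∑ k ∈ Finset.range π.K, ∫ s in F k..F (k + 1), f s := Finset.sum_le_sum fun k hk =>
      DLC.Valid.segment_bound_min hcap hInst hRstar hπ (Finset.mem_range.1 hk) t
    _ = ∫ s in (0 : ℝ)..t, f s := by
      rw [intervalIntegral.sum_integral_adjacent_intervals fun k _ =>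
        intervalIntegrable_potential_comp n c R π.measurable_cumA_div _ _, hF0, hFK]
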